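/- For every odd integer n ≥ 1 and every integer k ≥ 1, one has the closed form I_{n,k} = δ(n)·Σ_{j=0}^{k} ((−1)^{k+j} / n^{2(k+1−j)}) · ((2k+1)!/(2j)!) · (π/2)^{2j}. -/

import Mathlib

/-!
Two integrations by parts lower the exponent of `t` by two. At the endpoint `t = π / 2` an odd
frequency `n` gives `cos (n π / 2) = 0` and `sin (n π / 2) = δ(n)`, so
`I n (k + 1) = δ(n) (2k + 3) (π/2)^(2k+2) / n² - (2k + 3)(2k + 2) / n² · I n k`
with `I n 0 = δ(n) / n²`. The closed form satisfies the same recursion and initial value.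
-/

open Real MeasureTheory

/-- `I_{n,k} = ∫₀^{π/2} t^{2k+1} sin(nt) dt`. -/
noncomputable def I (n k : ℕ) : ℝ :=
  ∫ t in (0:ℝ)..(π / 2), t ^ (2 * k + 1) * Real.sin ((n : ℝ) * t)

/-- `δ(n) = 1` if `n ≡ 1 (mod 4)`, `δ(n) = -1` if `n ≡ 3 (mod 4)`. -/
noncomputable def delta (n : ℕ) : ℝ := if n % 4 = 1 then 1 else -1

open intervalIntegral Finset

section IntegrationByParts

variable {a c : ℝ}

theorem integral_pow_succ_mul_sin (hc : c ≠ 0) (m : ℕ) :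
    ∫ t in (0 : ℝ)..a, t ^ (m + 1) * sin (c * t) =
      -(a ^ (m + 1) * cos (c * a)) / c + (m + 1) / c * ∫ t in (0 : ℝ)..a, t ^ m * cos (c * t) := by
  have hu : ∀ x ∈ Set.uIcc 0 a, HasDerivAt (fun y : ℝ ↦ y ^ (m + 1)) ((m + 1) * x ^ m) x :=
    fun x _ ↦ by simpa using hasDerivAt_pow (m + 1) x
  have hv : ∀ x ∈ Set.uIcc 0 a, HasDerivAt (fun y ↦ -cos (c * y) / c) (sin (c * x)) x :=
    fun x _ ↦ by simpa [hc] using ((hasDerivAt_id x).const_mul c).cos.neg.div_const c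
  rw [integral_mul_deriv_eq_deriv_mul hu hv (Continuous.intervalIntegrable (by fun_prop) _ _)
    (Continuous.intervalIntegrable (by fun_prop) _ _)]
  have hrest : ∫ x in (0 : ℝ)..a, (m + 1) * x ^ m * (-cos (c * x) / c) =
      -((m + 1) / c) * ∫ x in (0 : ℝ)..a, x ^ m * cos (c * x) := by
    rw [← intervalIntegral.integral_const_mul]; congr 1; ext x; ring
  rw [hrest]; ring

theorem integral_pow_succ_mul_cos (hc : c ≠ 0) (m : ℕ) :
    ∫ t in (0 : ℝ)..a, t ^ (m + 1) * cos (c * t) =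
      a ^ (m + 1) * sin (c * a) / c - (m + 1) / c * ∫ t in (0 : ℝ)..a, t ^ m * sin (c * t) := by
  have hu : ∀ x ∈ Set.uIcc 0 a, HasDerivAt (fun y : ℝ ↦ y ^ (m + 1)) ((m + 1) * x ^ m) x :=
    fun x _ ↦ by simpa using hasDerivAt_pow (m + 1) x
  have hv : ∀ x ∈ Set.uIcc 0 a, HasDerivAt (fun y ↦ sin (c * y) / c) (cos (c * x)) x :=
    fun x _ ↦ by simpa [hc] using ((hasDerivAt_id x).const_mul c).sin.div_const c
  rw [integral_mul_deriv_eq_deriv_mul hu hv (Continuous.intervalIntegrable (by fun_prop) _ _)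
    (Continuous.intervalIntegrable (by fun_prop) _ _)]
  have hrest : ∫ x in (0 : ℝ)..a, (m + 1) * x ^ m * (sin (c * x) / c) =
      (m + 1) / c * ∫ x in (0 : ℝ)..a, x ^ m * sin (c * x) := by
    rw [← intervalIntegral.integral_const_mul]; congr 1; ext x; ring
  rw [hrest]; ring

theorem integral_id_mul_sin (hc : c ≠ 0) :
    ∫ t in (0 : ℝ)..a, t * sin (c * t) = -(a * cos (c * a)) / c + sin (c * a) / c ^ 2 := by
  have h := integral_pow_succ_mul_sin (a := a) hc 0
  simp only [zero_add, pow_one, pow_zero, one_mul, CharP.cast_eq_zero] at h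
  rw [h, integral_comp_mul_left (fun x ↦ cos x) hc, integral_cos, mul_zero, sin_zero]
  ring

theorem integral_pow_add_two_mul_sin (hc : c ≠ 0) (m : ℕ) :
    ∫ t in (0 : ℝ)..a, t ^ (m + 2) * sin (c * t) =
      -(a ^ (m + 2) * cos (c * a)) / c + (m + 2) * a ^ (m + 1) * sin (c * a) / c ^ 2
        - (m + 2) * (m + 1) / c ^ 2 * ∫ t in (0 : ℝ)..a, t ^ m * sin (c * t) := by
  rw [integral_pow_succ_mul_sin hc (m + 1), integral_pow_succ_mul_cos hc m]
  push_cast; field_simp; ring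

end IntegrationByParts

theorem delta_two_mul_add_one (j : ℕ) : delta (2 * j + 1) = (-1) ^ j := by
  rcases Nat.even_or_odd j with ⟨i, rfl⟩ | ⟨i, rfl⟩
  · have h : (2 * (i + i) + 1) % 4 = 1 := by omega
    simp [delta, h, Even.neg_one_pow ⟨i, rfl⟩]
  · have h : (2 * (2 * i + 1) + 1) % 4 ≠ 1 := by omega
    simp [delta, h, Odd.neg_one_pow ⟨i, rfl⟩]

theorem cos_odd_mul_pi_div_two {n : ℕ} (hn : Odd n) : cos (n * (π / 2)) = 0 := by
  obtain ⟨j, rfl⟩ := hn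
  rw [show ((2 * j + 1 : ℕ) : ℝ) * (π / 2) = j * π + π / 2 by push_cast; ring,
    cos_add_pi_div_two, sin_nat_mul_pi, neg_zero]

theorem sin_odd_mul_pi_div_two {n : ℕ} (hn : Odd n) : sin (n * (π / 2)) = delta n := by
  obtain ⟨j, rfl⟩ := hn
  rw [show ((2 * j + 1 : ℕ) : ℝ) * (π / 2) = j * π + π / 2 by push_cast; ring,
    sin_add_pi_div_two, cos_nat_mul_pi, delta_two_mul_add_one]

theorem I_zero {n : ℕ} (hn : Odd n) : I n 0 = delta n / n ^ 2 := by
  have hn0 : (n : ℝ) ≠ 0 := Nat.cast_ne_zero.mpr hn.pos.ne'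
  simp only [I, mul_zero, zero_add, pow_one]
  rw [integral_id_mul_sin hn0, cos_odd_mul_pi_div_two hn, sin_odd_mul_pi_div_two hn]
  ring

theorem I_succ {n : ℕ} (hn : Odd n) (k : ℕ) :
    I n (k + 1) = delta n * (2 * k + 3) * (π / 2) ^ (2 * k + 2) / n ^ 2
      - (2 * k + 3) * (2 * k + 2) / n ^ 2 * I n k := by
  have hn0 : (n : ℝ) ≠ 0 := Nat.cast_ne_zero.mpr hn.pos.ne'
  rw [I, show 2 * (k + 1) + 1 = 2 * k + 1 + 2 by ring, integral_pow_add_two_mul_sin hn0,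
    cos_odd_mul_pi_div_two hn, sin_odd_mul_pi_div_two hn, I]
  push_cast; ring

noncomputable def sinMomentSum (x a : ℝ) (k : ℕ) : ℝ :=
  ∑ j ∈ range (k + 1), ((-1 : ℝ) ^ (k + j) / x ^ (2 * (k + 1 - j))) *
    ((Nat.factorial (2 * k + 1) : ℝ) / (Nat.factorial (2 * j) : ℝ)) * a ^ (2 * j)

theorem sinMomentSum_zero (x a : ℝ) : sinMomentSum x a 0 = 1 / x ^ 2 := by
  simp [sinMomentSum]

theorem sinMomentSum_succ {x : ℝ} (hx : x ≠ 0) (a : ℝ) (k : ℕ) :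
    sinMomentSum x a (k + 1) = (2 * k + 3) * a ^ (2 * k + 2) / x ^ 2
      - (2 * k + 3) * (2 * k + 2) / x ^ 2 * sinMomentSum x a k := by
  have hfac : (Nat.factorial (2 * (k + 1) + 1) : ℝ) =
      (2 * k + 3) * (2 * k + 2) * Nat.factorial (2 * k + 1) := by
    rw [show 2 * (k + 1) + 1 = 2 * k + 1 + 1 + 1 by ring, Nat.factorial_succ, Nat.factorial_succ]
    push_cast; ring
  have hterm : ∀ j ∈ range (k + 1),
      (-1 : ℝ) ^ (k + 1 + j) / x ^ (2 * (k + 1 + 1 - j)) *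
        ((Nat.factorial (2 * (k + 1) + 1) : ℝ) / Nat.factorial (2 * j)) * a ^ (2 * j) =
      -((2 * k + 3) * (2 * k + 2) / x ^ 2) * ((-1 : ℝ) ^ (k + j) / x ^ (2 * (k + 1 - j)) *
        ((Nat.factorial (2 * k + 1) : ℝ) / Nat.factorial (2 * j)) * a ^ (2 * j)) := by
    intro j hj
    rw [show 2 * (k + 1 + 1 - j) = 2 * (k + 1 - j) + 2 by grind, hfac,
      show k + 1 + j = k + j + 1 by ring]
    field_simp
    ring
  have hlast : (-1 : ℝ) ^ (k + 1 + (k + 1)) / x ^ (2 * (k + 1 + 1 - (k + 1))) *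
      ((Nat.factorial (2 * (k + 1) + 1) : ℝ) / Nat.factorial (2 * (k + 1))) * a ^ (2 * (k + 1)) =
      (2 * k + 3) * a ^ (2 * k + 2) / x ^ 2 := by
    rw [show k + 1 + (k + 1) = 2 * (k + 1) by ring, pow_mul, Nat.factorial_succ (2 * (k + 1)),
      show k + 1 + 1 - (k + 1) = 1 by omega]
    field_simp
    push_cast
    ring
  rw [sinMomentSum, sum_range_succ, sum_congr rfl hterm, ← mul_sum, ← sinMomentSum, hlast]
  ring

theorem I_closed_form_general (n k : ℕ) (hno : Odd n) :
    I n k = delta n * ∑ j ∈ Finset.range (k + 1),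
      ((-1 : ℝ) ^ (k + j) / (n : ℝ) ^ (2 * (k + 1 - j))) *
        ((Nat.factorial (2 * k + 1) : ℝ) / (Nat.factorial (2 * j) : ℝ)) *
        (π / 2) ^ (2 * j) := by
  show I n k = delta n * sinMomentSum n (π / 2) k
  have hn0 : (n : ℝ) ≠ 0 := Nat.cast_ne_zero.mpr hno.pos.ne'
  induction k with
  | zero => rw [I_zero hno, sinMomentSum_zero]; ring
  | succ k ih => rw [I_succ hno, ih, sinMomentSum_succ hn0]; ring

/-- For odd `n ≥ 1` and `k ≥ 1`:
`I_{n,k} = δ(n) Σ_{j=0}^{k} ((-1)^{k+j} / n^{2(k+1-j)}) ((2k+1)!/(2j)!) (π/2)^{2j}`. -/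
theorem I_closed_form (n k : ℕ) (hn : 1 ≤ n) (hno : Odd n) (hk : 1 ≤ k) :
    I n k = delta n * ∑ j ∈ Finset.range (k + 1),
      ((-1 : ℝ) ^ (k + j) / (n : ℝ) ^ (2 * (k + 1 - j))) *
        ((Nat.factorial (2 * k + 1) : ℝ) / (Nat.factorial (2 * j) : ℝ)) *
        (π / 2) ^ (2 * j) :=
  I_closed_form_general n k hno
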